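/- The identity D_1 Box_1 = Box_2 D_1 holds as differential operators on smooth compactly supported sections, where Box_1 = (D_0 D_0*)² + D_1* D_1 and Box_2 = D_1 D_1* + (D_2* D_2)². -/

import Mathlib

open Complex Finset MeasureTheory
open scoped InnerProductSpace

noncomputable section

/-- The space `ℝ^{2n}` of two vector variables `x_A = (x_{A1},…,x_{An})`, `A = 0,1`. -/
abbrev Pt (n : ℕ) := EuclideanSpace ℝ (Fin 2 × Fin n)

variable {n : ℕ} {S : Type*} [NormedAddCommGroup S] [NormedSpace ℂ S]

/-- The partial derivative `∂_{Aj}`. -/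
def pd (A : Fin 2) (j : Fin n) (f : Pt n → S) : Pt n → S :=
  fun x => fderiv ℝ f x (EuclideanSpace.single (A, j) 1)

/-- The Dirac operator `∇_A = Σ_j γ_j ∂_{Aj}` in the `A`-th vector variable. -/
def nabla (γ : Fin n → S →L[ℂ] S) (A : Fin 2) (f : Pt n → S) : Pt n → S :=
  fun x => ∑ j, γ j (pd A j f x)

/-- The Clifford relation `γ_j γ_k + γ_k γ_j = -2 δ_{jk}`. -/
def CliffordRel (γ : Fin n → S →L[ℂ] S) : Prop :=
  ∀ j k : Fin n, ∀ x : S, γ j (γ k x) + γ k (γ j x) = if j = k then (-2 : ℂ) • x else 0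

/-- The operator `D_0 f = (∇_0 f, ∇_1 f)` of the Dirac complex. -/
def D0 (γ : Fin n → S →L[ℂ] S) (f : Pt n → S) : Fin 2 → Pt n → S :=
  fun A => nabla γ A f

/-- The operator `(D_1 g)_A = ∇_0 ∇_A g_1 - ∇_1 ∇_A g_0` of the Dirac complex. -/
def D1 (γ : Fin n → S →L[ℂ] S) (g : Fin 2 → Pt n → S) : Fin 2 → Pt n → S :=
  fun A x => nabla γ 0 (nabla γ A (g 1)) x - nabla γ 1 (nabla γ A (g 0)) x

/-- The operator `D_2 h = ∇_0 h_1 - ∇_1 h_0` of the Dirac complex. -/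
def D2 (γ : Fin n → S →L[ℂ] S) (h : Fin 2 → Pt n → S) : Pt n → S :=
  fun x => nabla γ 0 (h 1) x - nabla γ 1 (h 0) x

/-- The Laplacian `Δ_A = -Σ_j ∂²_{Aj} = ∇_A ∇_A` in the `A`-th vector variable. -/
def DeltaA (A : Fin 2) (u : Pt n → S) : Pt n → S :=
  fun x => -∑ j, pd A j (pd A j u) x

/-- The formal adjoint `D_0* ψ = ∇_0 ψ_0 + ∇_1 ψ_1`. -/
def D0s (γ : Fin n → S →L[ℂ] S) (ψ : Fin 2 → Pt n → S) : Pt n → S :=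
  fun x => nabla γ 0 (ψ 0) x + nabla γ 1 (ψ 1) x

/-- The formal adjoint `D_1* = ((-∇_0∇_1, -Δ_1), (Δ_0, ∇_1∇_0))`. -/
def D1s (γ : Fin n → S →L[ℂ] S) (h : Fin 2 → Pt n → S) : Fin 2 → Pt n → S :=
  fun A x =>
    if A = 0 then -(nabla γ 0 (nabla γ 1 (h 0)) x) - DeltaA 1 (h 1) x
    else DeltaA 0 (h 0) x + nabla γ 1 (nabla γ 0 (h 1)) x

/-- The formal adjoint `D_2* ρ = (-∇_1 ρ, ∇_0 ρ)`. -/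
def D2s (γ : Fin n → S →L[ℂ] S) (ρ : Pt n → S) : Fin 2 → Pt n → S :=
  fun A x => if A = 0 then -(nabla γ 1 ρ x) else nabla γ 0 ρ x

/-- The standard Laplacian `Σ_{A,j} ∂²_{Aj}` on `ℝ^{2n}` (so `Lap ∘ Lap` is the bi-Laplacian `Δ²`). -/
def Lap (u : Pt n → S) : Pt n → S :=
  fun x => ∑ A : Fin 2, ∑ j, pd A j (pd A j u) x

/-- The fourth-order Hodge Laplacian `□_1 = (D_0 D_0*)² + D_1* D_1`. -/
def Box1 (γ : Fin n → S →L[ℂ] S) (g : Fin 2 → Pt n → S) : Fin 2 → Pt n → S :=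
  fun A x => D0 γ (D0s γ (D0 γ (D0s γ g))) A x + D1s γ (D1 γ g) A x

/-- The fourth-order Hodge Laplacian `□_2 = D_1 D_1* + (D_2* D_2)²`. -/
def Box2 (γ : Fin n → S →L[ℂ] S) (h : Fin 2 → Pt n → S) : Fin 2 → Pt n → S :=
  fun A x => D1 γ (D1s γ h) A x + D2s γ (D2 γ (D2s γ (D2 γ h))) A x

namespace Stmt15Aux

variable {γ : Fin n → S →L[ℂ] S} {A B : Fin 2} {j k : Fin n} {f g : Pt n → S}

lemma pd_contDiff (hf : ContDiff ℝ (⊤ : ℕ∞) f) : ContDiff ℝ (⊤ : ℕ∞) (pd A j f) :=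
  (hf.fderiv_right (by simp)).clm_apply contDiff_const

lemma pd_add (hf : Differentiable ℝ f) (hg : Differentiable ℝ g) :
    pd A j (fun x => f x + g x) = fun x => pd A j f x + pd A j g x := by
  funext x; simp [pd, fderiv_fun_add (hf x) (hg x)]

lemma pd_smul (c : ℂ) (hf : Differentiable ℝ f) :
    pd A j (fun x => c • f x) = fun x => c • pd A j f x := by
  funext x; simp [pd, fderiv_fun_const_smul (hf x) c]

lemma pd_sum {ι : Type*} (u : Finset ι) (F : ι → Pt n → S) (h : ∀ i, Differentiable ℝ (F i)) :
    pd A j (fun x => ∑ i ∈ u, F i x) = fun x => ∑ i ∈ u, pd A j (F i) x := by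
  funext x; simp [pd, fderiv_fun_sum (fun i _ => h i x)]

lemma pd_clm (hf : Differentiable ℝ f) (L : S →L[ℂ] S) :
    pd A j (fun x => L (f x)) = fun x => L (pd A j f x) := by
  funext x
  have h := (((L.restrictScalars ℝ).hasFDerivAt).comp x (hf x).hasFDerivAt).fderiv
  simpa [pd, Function.comp_def] using
    congrArg (fun T : Pt n →L[ℝ] S => T (EuclideanSpace.single (A, j) 1)) h

lemma fderiv_fderiv_apply (hf : ContDiff ℝ (⊤ : ℕ∞) f) (x v w : Pt n) :
    fderiv ℝ (fun y => fderiv ℝ f y w) x v = fderiv ℝ (fderiv ℝ f) x v w := by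
  have hΦ : Differentiable ℝ (fderiv ℝ f) := (hf.fderiv_right (by simp) : ContDiff ℝ (⊤ : ℕ∞) (fderiv ℝ f)).differentiable (by simp)
  have h := ((ContinuousLinearMap.apply ℝ S w).hasFDerivAt).comp x (hΦ x).hasFDerivAt
  simpa [Function.comp_def] using congrArg (fun T : Pt n →L[ℝ] S => T v) h.fderiv

lemma pd_comm (hf : ContDiff ℝ (⊤ : ℕ∞) f) : pd A j (pd B k f) = pd B k (pd A j f) := by
  funext x
  have h := (hf.contDiffAt (x := x)).isSymmSndFDerivAt (by rw [minSmoothness_of_isRCLikeNormedField]; change ((2 : ℕ∞) : WithTop ℕ∞) ≤ ((⊤ : ℕ∞) : WithTop ℕ∞); exact WithTop.coe_le_coe.mpr le_top)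
  show fderiv ℝ (fun y => fderiv ℝ f y _) x _ = fderiv ℝ (fun y => fderiv ℝ f y _) x _
  rw [fderiv_fderiv_apply hf, fderiv_fderiv_apply hf, h.eq]

lemma nabla_contDiff (hf : ContDiff ℝ (⊤ : ℕ∞) f) : ContDiff ℝ (⊤ : ℕ∞) (nabla γ A f) := by
  unfold nabla
  exact ContDiff.sum fun j _ => ((γ j).restrictScalars ℝ).contDiff.comp (pd_contDiff hf)

lemma pd_nabla (hf : ContDiff ℝ (⊤ : ℕ∞) f) : pd B k (nabla γ A f) = nabla γ A (pd B k f) := by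
  unfold nabla
  rw [pd_sum Finset.univ (fun i x => (γ i) (pd A i f x))
    (fun i => ((((γ i).restrictScalars ℝ).contDiff.comp (pd_contDiff hf)).differentiable (by simp) : Differentiable ℝ fun x => (γ i) (pd A i f x)))]
  funext x
  refine Finset.sum_congr rfl fun i _ => ?_
  rw [pd_clm ((pd_contDiff hf).differentiable (by simp)) (γ i), pd_comm hf]

lemma nabla_add (hf : ContDiff ℝ (⊤ : ℕ∞) f) (hg : ContDiff ℝ (⊤ : ℕ∞) g) :
    nabla γ A (fun x => f x + g x) = fun x => nabla γ A f x + nabla γ A g x := by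
  funext x
  simp only [nabla, pd_add (hf.differentiable (by simp)) (hg.differentiable (by simp)), map_add,
    Finset.sum_add_distrib]

lemma nabla_smul (c : ℂ) (hf : ContDiff ℝ (⊤ : ℕ∞) f) :
    nabla γ A (fun x => c • f x) = fun x => c • nabla γ A f x := by
  funext x
  simp only [nabla, pd_smul c (hf.differentiable (by simp)), _root_.map_smul, Finset.smul_sum]

lemma nabla_sum {ι : Type*} (u : Finset ι) (F : ι → Pt n → S) (h : ∀ i, ContDiff ℝ (⊤ : ℕ∞) (F i)) :
    nabla γ A (fun x => ∑ i ∈ u, F i x) = fun x => ∑ i ∈ u, nabla γ A (F i) x := by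
  funext x
  simp only [nabla, pd_sum u F (fun i => (h i).differentiable (by simp)), map_sum]
  exact Finset.sum_comm

lemma nabla_pd (hf : ContDiff ℝ (⊤ : ℕ∞) f) : nabla γ A (pd B k f) = pd B k (nabla γ A f) :=
  (pd_nabla hf).symm

/-- The key mixed Clifford computation. -/
lemma nabla_nabla_add (hγ : CliffordRel γ) (hf : ContDiff ℝ (⊤ : ℕ∞) f) :
    (fun x => nabla γ A (nabla γ B f) x + nabla γ B (nabla γ A f) x)
      = fun x => (-2 : ℂ) • ∑ j, pd A j (pd B j f) x := by
  funext x
  have e1 : nabla γ A (nabla γ B f) x = ∑ j, ∑ k, γ j (γ k (pd A j (pd B k f) x)) := by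
    simp only [nabla, pd_nabla hf, nabla]
    refine Finset.sum_congr rfl fun j _ => ?_
    rw [map_sum]
    refine Finset.sum_congr rfl fun k _ => ?_
    rw [pd_comm hf]
  have e2 : nabla γ B (nabla γ A f) x = ∑ j, ∑ k, γ k (γ j (pd A j (pd B k f) x)) := by
    simp only [nabla, pd_nabla hf, nabla]
    rw [Finset.sum_comm]
    refine Finset.sum_congr rfl fun j _ => ?_
    rw [map_sum]
  rw [e1, e2, ← Finset.sum_add_distrib]
  simp only [← Finset.sum_add_distrib]
  rw [Finset.sum_congr rfl fun j _ => Finset.sum_congr rfl fun k _ => hγ j k _]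
  simp [Finset.sum_ite_eq, Finset.smul_sum]

lemma nabla_nabla_self (hγ : CliffordRel γ) (hf : ContDiff ℝ (⊤ : ℕ∞) f) :
    nabla γ A (nabla γ A f) = DeltaA A f := by
  funext x
  have hx := congrFun (nabla_nabla_add (A := A) (B := A) hγ hf) x
  have h2 : (2 : ℂ) • nabla γ A (nabla γ A f) x = (2 : ℂ) • DeltaA A f x := by
    rw [two_smul, hx, DeltaA]
    simp
  calc nabla γ A (nabla γ A f) x
      = (2 : ℂ)⁻¹ • ((2 : ℂ) • nabla γ A (nabla γ A f) x) := by
        rw [inv_smul_smul₀ (two_ne_zero (α := ℂ))]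
    _ = DeltaA A f x := by rw [h2, inv_smul_smul₀ (two_ne_zero (α := ℂ))]

lemma contDiff_sum_pd (hf : ContDiff ℝ (⊤ : ℕ∞) f) :
    ContDiff ℝ (⊤ : ℕ∞) (fun x => ∑ j, pd 0 j (pd 1 j f) x) :=
  ContDiff.sum fun j _ => pd_contDiff (pd_contDiff hf)

lemma nabla_sigma (hγ : CliffordRel γ) (hf : ContDiff ℝ (⊤ : ℕ∞) f) :
    nabla γ B (fun x => nabla γ 0 (nabla γ 1 f) x + nabla γ 1 (nabla γ 0 f) x)
      = fun x => nabla γ 0 (nabla γ 1 (nabla γ B f)) x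
          + nabla γ 1 (nabla γ 0 (nabla γ B f)) x := by
  rw [nabla_nabla_add hγ hf, nabla_nabla_add hγ (nabla_contDiff hf)]
  rw [nabla_smul (-2 : ℂ) (contDiff_sum_pd hf),
    nabla_sum Finset.univ (fun j => pd 0 j (pd 1 j f))
      (fun j => pd_contDiff (pd_contDiff hf))]
  funext x
  congr 1
  refine Finset.sum_congr rfl fun j _ => ?_
  rw [nabla_pd (pd_contDiff hf), nabla_pd hf]

variable (n S) in
def V : Submodule ℂ (Pt n → S) where
  carrier := {f | ContDiff ℝ (⊤ : ℕ∞) f}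
  add_mem' hf hg := by
    simp only [Set.mem_setOf_eq] at *
    exact ContDiff.add hf hg
  zero_mem' := by
    simp only [Set.mem_setOf_eq]
    exact contDiff_const
  smul_mem' c f hf := by
    simp only [Set.mem_setOf_eq] at *
    exact ContDiff.const_smul c hf

variable (γ) in
def nL (A : Fin 2) : Module.End ℂ (V n S) where
  toFun v := ⟨nabla γ A v.1, nabla_contDiff v.2⟩
  map_add' u v := Subtype.ext (by
    show nabla γ A (fun x => u.1 x + v.1 x) = _
    rw [nabla_add u.2 v.2]; rfl)
  map_smul' c v := Subtype.ext (by
    show nabla γ A (fun x => c • v.1 x) = _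
    rw [nabla_smul c v.2]; rfl)

@[simp] lemma nL_coe (v : V n S) : ((nL γ A v : V n S) : Pt n → S) = nabla γ A v.1 := rfl

lemma sigma_comm (hγ : CliffordRel γ) (B : Fin 2) :
    (nL γ 0 * nL γ 1 + nL γ 1 * nL γ 0) * nL γ B
      = nL γ B * (nL γ 0 * nL γ 1 + nL γ 1 * nL γ 0) := by
  apply LinearMap.ext; intro v
  apply Subtype.ext
  show (fun x => nabla γ 0 (nabla γ 1 (nabla γ B v.1)) x
        + nabla γ 1 (nabla γ 0 (nabla γ B v.1)) x)
      = nabla γ B (fun x => nabla γ 0 (nabla γ 1 v.1) x + nabla γ 1 (nabla γ 0 v.1) x)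
  exact (nabla_sigma hγ v.2).symm

variable (γ) in
def D0V (v : V n S) : Fin 2 → V n S := fun A => nL γ A v

variable (γ) in
def D0sV (ψ : Fin 2 → V n S) : V n S := nL γ 0 (ψ 0) + nL γ 1 (ψ 1)

variable (γ) in
def D1V (g : Fin 2 → V n S) : Fin 2 → V n S :=
  fun A => nL γ 0 (nL γ A (g 1)) - nL γ 1 (nL γ A (g 0))

variable (γ) in
def D1sV (h : Fin 2 → V n S) : Fin 2 → V n S :=
  fun A => if A = 0 then -(nL γ 0 (nL γ 1 (h 0))) - nL γ 1 (nL γ 1 (h 1))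
    else nL γ 0 (nL γ 0 (h 0)) + nL γ 1 (nL γ 0 (h 1))

variable (γ) in
def D2V (h : Fin 2 → V n S) : V n S := nL γ 0 (h 1) - nL γ 1 (h 0)

variable (γ) in
def D2sV (ρ : V n S) : Fin 2 → V n S :=
  fun A => if A = 0 then -(nL γ 1 ρ) else nL γ 0 ρ

variable (γ) in
def Box1V (g : Fin 2 → V n S) : Fin 2 → V n S :=
  fun A => D0V γ (D0sV γ (D0V γ (D0sV γ g))) A + D1sV γ (D1V γ g) A

variable (γ) in
def Box2V (h : Fin 2 → V n S) : Fin 2 → V n S :=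
  fun A => D1V γ (D1sV γ h) A + D2sV γ (D2V γ (D2sV γ (D2V γ h))) A

section bridge
variable (hV : Fin 2 → V n S) (v : V n S)

lemma D0_val : D0 γ ((v : V n S) : Pt n → S) = fun B => (D0V γ v B : Pt n → S) := rfl

lemma D0s_val : D0s γ (fun C => ((hV C : V n S) : Pt n → S)) = (D0sV γ hV : Pt n → S) := rfl

lemma D1_val : D1 γ (fun C => ((hV C : V n S) : Pt n → S)) = fun B => (D1V γ hV B : Pt n → S) := rfl

lemma D2_val : D2 γ (fun C => ((hV C : V n S) : Pt n → S)) = (D2V γ hV : Pt n → S) := rfl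

lemma D2s_val : D2s γ ((v : V n S) : Pt n → S) = fun B => (D2sV γ v B : Pt n → S) := by
  funext B x
  by_cases hB : B = 0 <;> simp [D2s, D2sV, hB]

lemma D1s_val (hγ : CliffordRel γ) :
    D1s γ (fun C => ((hV C : V n S) : Pt n → S)) = fun B => (D1sV γ hV B : Pt n → S) := by
  funext B x
  by_cases hB : B = 0 <;>
    simp [D1s, D1sV, hB, ← nabla_nabla_self (A := 0) hγ (hV 0).2,
      ← nabla_nabla_self (A := 1) hγ (hV 1).2, sub_eq_add_neg]

lemma Box1_val (hγ : CliffordRel γ) :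
    Box1 γ (fun C => ((hV C : V n S) : Pt n → S)) = fun B => (Box1V γ hV B : Pt n → S) := by
  funext B x
  show D0 γ (D0s γ (D0 γ (D0s γ _))) B x + D1s γ (D1 γ _) B x = _
  rw [D0s_val, D0_val, D0s_val (D0V γ (D0sV γ hV)), D0_val, D1_val, D1s_val (D1V γ hV) hγ]
  rfl

lemma Box2_val (hγ : CliffordRel γ) :
    Box2 γ (fun C => ((hV C : V n S) : Pt n → S)) = fun B => (Box2V γ hV B : Pt n → S) := by
  funext B x
  show D1 γ (D1s γ _) B x + D2s γ (D2 γ (D2s γ (D2 γ _))) B x = _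
  rw [D1s_val hV hγ, D1_val, D2_val, D2s_val, D2_val (D2sV γ (D2V γ hV)),
    D2s_val (D2V γ (D2sV γ (D2V γ hV)))]
  rfl

end bridge

end Stmt15Aux


namespace Stmt15Alg

variable {M : Type*} [AddCommGroup M]

section
variable (a b : M → M)

/-- abstract `∇_A` -/
def nble : Fin 2 → M → M := fun A => if A = 0 then a else b

@[simp] lemma nble0 : nble a b 0 = a := rfl
@[simp] lemma nble1 : nble a b 1 = b := rfl

def aD0 (v : M) : Fin 2 → M := fun A => nble a b A v
def aD0s (ψ : Fin 2 → M) : M := a (ψ 0) + b (ψ 1)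
def aD1 (g : Fin 2 → M) : Fin 2 → M :=
  fun A => a (nble a b A (g 1)) - b (nble a b A (g 0))
def aD1s (h : Fin 2 → M) : Fin 2 → M :=
  fun A => if A = 0 then -(a (b (h 0))) - b (b (h 1)) else a (a (h 0)) + b (a (h 1))
def aD2 (h : Fin 2 → M) : M := a (h 1) - b (h 0)
def aD2s (ρ : M) : Fin 2 → M := fun A => if A = 0 then -(b ρ) else a ρ
def aBox1 (g : Fin 2 → M) : Fin 2 → M :=
  fun A => aD0 a b (aD0s a b (aD0 a b (aD0s a b g))) A + aD1s a b (aD1 a b g) A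
def aBox2 (h : Fin 2 → M) : Fin 2 → M :=
  fun A => aD1 a b (aD1s a b h) A + aD2s a b (aD2 a b (aD2s a b (aD2 a b h))) A
end

theorem abstract_identity (a b s : M → M)
    (ha_add : ∀ x y, a (x + y) = a x + a y) (ha_neg : ∀ x, a (-x) = -(a x))
    (hb_add : ∀ x y, b (x + y) = b x + b y) (hb_neg : ∀ x, b (-x) = -(b x))
    (hs_add : ∀ x y, s (x + y) = s x + s y) (hs_neg : ∀ x, s (-x) = -(s x))
    (hq1 : ∀ v, b (a v) = s v - a (b v))
    (hq2 : ∀ v, a (s v) = s (a v))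
    (hq3 : ∀ v, b (s v) = s (b v))
    (g : Fin 2 → M) (A : Fin 2) :
    aD1 a b (aBox1 a b g) A = aBox2 a b (aD1 a b g) A := by
  have ha_sub : ∀ x y, a (x - y) = a x - a y := by
    intro x y; rw [sub_eq_add_neg, ha_add, ha_neg, sub_eq_add_neg]
  have hb_sub : ∀ x y, b (x - y) = b x - b y := by
    intro x y; rw [sub_eq_add_neg, hb_add, hb_neg, sub_eq_add_neg]
  have hs_sub : ∀ x y, s (x - y) = s x - s y := by
    intro x y; rw [sub_eq_add_neg, hs_add, hs_neg, sub_eq_add_neg]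
  fin_cases A <;>
  · simp only [aD1, aBox1, aBox2, aD0, aD0s, aD1s, aD2, aD2s, nble0, nble1, Fin.mk_zero,
      Fin.mk_one, Fin.isValue, show ((1 : Fin 2) = 0) = False from by decide,
      show ((0 : Fin 2) = 0) = True from by decide, if_true, if_false]
    simp only [ha_add, ha_neg, ha_sub, hb_add, hb_neg, hb_sub, hs_add, hs_neg, hs_sub,
      hq1, hq2, hq3]
    abel

end Stmt15Alg

set_option maxHeartbeats 1000000 in
open Stmt15Aux Stmt15Alg in
/-- The identity `D_1 □_1 = □_2 D_1` holds as differential operators on smooth compactly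
supported sections, where `□_1 = (D_0 D_0*)² + D_1* D_1` and `□_2 = D_1 D_1* + (D_2* D_2)²`. -/
theorem stmt15 (γ : Fin n → S →L[ℂ] S) (hγ : CliffordRel γ)
    (g : Fin 2 → Pt n → S) (hg : ∀ A, ContDiff ℝ (⊤ : ℕ∞) (g A))
    (hgc : ∀ A, HasCompactSupport (g A)) (A : Fin 2) (x : Pt n) :
    D1 γ (Box1 γ g) A x = Box2 γ (D1 γ g) A x := by
  classical
  set gV : Fin 2 → V n S := fun B => ⟨g B, hg B⟩ with hgV
  have hg_eq : g = fun B => ((gV B : V n S) : Pt n → S) := rfl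
  have key : ∀ B, D1V γ (Box1V γ gV) B = Box2V γ (D1V γ gV) B := by
    intro B
    set a : V n S → V n S := ⇑(nL γ 0) with ha_def
    set b : V n S → V n S := ⇑(nL γ 1) with hb_def
    set sf : V n S → V n S := fun v => nL γ 0 (nL γ 1 v) + nL γ 1 (nL γ 0 v) with hs_def
    have hc' : ∀ C, nble a b C = ⇑(nL (n := n) (S := S) γ C) := by
      intro C; fin_cases C <;> rfl
    have hq2 : ∀ v, a (sf v) = sf (a v) := by
      intro v
      have h := LinearMap.congr_fun (sigma_comm hγ 0) v
      simp only [Module.End.mul_apply, LinearMap.add_apply] at h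
      exact h.symm
    have hq3 : ∀ v, b (sf v) = sf (b v) := by
      intro v
      have h := LinearMap.congr_fun (sigma_comm hγ 1) v
      simp only [Module.End.mul_apply, LinearMap.add_apply] at h
      exact h.symm
    have habs := abstract_identity a b sf
      (fun x y => map_add _ x y) (fun x => map_neg _ x)
      (fun x y => map_add _ x y) (fun x => map_neg _ x)
      (by intro x y; simp only [hs_def, map_add]; abel)
      (by intro x; simp only [hs_def, map_neg]; abel)
      (by intro v; simp only [hs_def]; abel)
      hq2 hq3 gV B
    simp only [aD1, aBox1, aBox2, aD0, aD0s, aD1s, aD2, aD2s, hc'] at habs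
    simp only [D1V, Box1V, Box2V, D0V, D0sV, D1sV, D2V, D2sV]
    exact habs
  rw [hg_eq, Box1_val gV hγ, D1_val (Box1V γ gV), D1_val gV, Box2_val (D1V γ gV) hγ]
  exact congrArg (fun v : V n S => (v : Pt n → S) x) (key A)
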